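/- arXiv:1103.1436 — 5 statements merged into one kernel-verified Lean document; each statement's English description precedes it below -/
import Mathlib

section
/- Let L be a Lie algebra over a field K of characteristic ≠ 2, and let x ∈ L be an extremal element with associated linear form f_x, i.e. ⁅x, ⁅x, y⁆⁆ = f_x(y) • x for all y ∈ L. Then for all y, z ∈ L, the first Premet identity holds: 2 • ⁅x, ⁅y, ⁅x, z⁆⁆⁆ = f_x(⁅y,z⁆) • x - f_x(z) • ⁅x,y⁆ - f_x(y) • ⁅x,z⁆. -/
/-!
Apply `ad x` twice to `⁅y, z⁆` and expand by the second-order Leibniz rule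
`ad_x² ⁅y, z⁆ = ⁅ad_x² y, z⁆ + 2 ⁅ad_x y, ad_x z⁆ + ⁅y, ad_x² z⁆`. Extremality turns each `ad_x²`
into a multiple of `x`, and the Jacobi identity rewrites the middle term as
`⁅x, ⁅y, ⁅x, z⁆⁆⁆ - ⁅y, fx z • x⁆`.
-/

theorem leibniz_lie_sq {L : Type*} [LieRing L] (x y z : L) :
    ⁅x, ⁅x, ⁅y, z⁆⁆⁆ = ⁅⁅x, ⁅x, y⁆⁆, z⁆ + 2 • ⁅⁅x, y⁆, ⁅x, z⁆⁆ + ⁅y, ⁅x, ⁅x, z⁆⁆⁆ := by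
  rw [leibniz_lie x y z, lie_add, leibniz_lie x ⁅x, y⁆ z, leibniz_lie x y ⁅x, z⁆]
  abel

theorem premet_identity_one_general {K L : Type*} [Field K] [LieRing L] [LieAlgebra K L]
    (x : L) (fx : L →ₗ[K] K)
    (hx : ∀ y : L, ⁅x, ⁅x, y⁆⁆ = fx y • x) :
    ∀ y z : L, (2 : K) • ⁅x, ⁅y, ⁅x, z⁆⁆⁆ =
      fx ⁅y, z⁆ • x - fx z • ⁅x, y⁆ - fx y • ⁅x, z⁆ := by
  intro y z
  have h := leibniz_lie_sq x y z
  rw [lie_lie x y, hx, hx, hx, smul_lie, lie_smul, ← lie_skew y x] at h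
  linear_combination (norm := module) -h

theorem premet_identity_one {K L : Type*} [Field K] [LieRing L] [LieAlgebra K L]
    (hchar : (2 : K) ≠ 0) (x : L) (fx : L →ₗ[K] K)
    (hx : ∀ y : L, ⁅x, ⁅x, y⁆⁆ = fx y • x) :
    ∀ y z : L, (2 : K) • ⁅x, ⁅y, ⁅x, z⁆⁆⁆ =
      fx ⁅y, z⁆ • x - fx z • ⁅x, y⁆ - fx y • ⁅x, z⁆ :=
  premet_identity_one_general x fx hx
end

section
/- Let L be a Lie algebra over a field K of characteristic ≠ 2, generated by two extremal elements x, y with associated linear forms f_x, f_y (so ⁅x,⁅x,m⁆⁆ = f_x(m) • x and ⁅y,⁅y,m⁆⁆ = f_y(m) • y for all m ∈ L). If ⁅x,y⁆ ≠ 0 and the family (x, y, ⁅x,y⁆) is linearly independent, then f_x(y) = f_y(x). -/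
/-! Apply `ad y` to `⁅x, ⁅x, y⁆⁆ = f_x(y) • x`. Directly this gives `-f_x(y) • ⁅x, y⁆`; through the
Leibniz rule, where `⁅⁅y, x⁆, ⁅x, y⁆⁆ = 0` and `⁅y, ⁅x, y⁆⁆ = -f_y(x) • y`, it gives
`-f_y(x) • ⁅x, y⁆`. Since `⁅x, y⁆ ≠ 0`, the two scalars agree. -/

theorem LieAlgebra.smul_lie_eq_smul_lie_of_lie_lie {R L : Type*} [CommRing R] [LieRing L]
    [LieAlgebra R L] {x y : L} {a b : R}
    (hx : ⁅x, ⁅x, y⁆⁆ = a • x) (hy : ⁅y, ⁅y, x⁆⁆ = b • y) :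
    a • ⁅x, y⁆ = b • ⁅x, y⁆ := by
  have hyx : ⁅y, ⁅x, y⁆⁆ = -(b • y) := by rw [← lie_skew x y, lie_neg, hy]
  have hcomm : ⁅⁅y, x⁆, ⁅x, y⁆⁆ = 0 := by rw [← lie_skew y x, neg_lie, lie_self, neg_zero]
  have key : -(a • ⁅x, y⁆) = -(b • ⁅x, y⁆) :=
    calc -(a • ⁅x, y⁆) = ⁅y, ⁅x, ⁅x, y⁆⁆⁆ := by rw [hx, lie_smul, ← lie_skew y x, smul_neg]
      _ = ⁅⁅y, x⁆, ⁅x, y⁆⁆ + ⁅x, ⁅y, ⁅x, y⁆⁆⁆ := leibniz_lie y x ⁅x, y⁆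
      _ = -(b • ⁅x, y⁆) := by rw [hcomm, zero_add, hyx, lie_neg, lie_smul]
  exact neg_injective key

theorem fxy_eq_fyx_general {K L : Type*} [Field K] [LieRing L] [LieAlgebra K L]
    (x y : L) (fx fy : L →ₗ[K] K)
    (hx : ∀ m : L, ⁅x, ⁅x, m⁆⁆ = fx m • x)
    (hy : ∀ m : L, ⁅y, ⁅y, m⁆⁆ = fy m • y)
    (hne : ⁅x, y⁆ ≠ 0) :
    fx y = fy x :=
  smul_left_injective K hne (LieAlgebra.smul_lie_eq_smul_lie_of_lie_lie (hx y) (hy x))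

theorem fxy_eq_fyx {K L : Type*} [Field K] [LieRing L] [LieAlgebra K L]
    (hchar : (2 : K) ≠ 0) (x y : L) (fx fy : L →ₗ[K] K)
    (hx : ∀ m : L, ⁅x, ⁅x, m⁆⁆ = fx m • x)
    (hy : ∀ m : L, ⁅y, ⁅y, m⁆⁆ = fy m • y)
    (hgen : LieSubalgebra.lieSpan K L {x, y} = ⊤)
    (hne : ⁅x, y⁆ ≠ 0)
    (hind : LinearIndependent K ![x, y, ⁅x, y⁆]) :
    fx y = fy x :=
  fxy_eq_fyx_general x y fx fy hx hy hne
end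

section
/- Let L be a Lie algebra over a field K of characteristic ≠ 2 generated by two extremal elements x and y. Then L is spanned by {x, y, ⁅x,y⁆}; in particular dim L ≤ 3. -/
/-! Extremality makes both double brackets `⁅x, ⁅x, y⁆⁆` and `⁅y, ⁅y, x⁆⁆` multiples of a generator,
so the span of `x`, `y`, `⁅x, y⁆` is closed under the bracket. Being a subalgebra containing `x` and
`y` and contained in the subalgebra they generate, it is all of `L`. -/

open Submodule

namespace LieSubalgebra

variable {R L : Type*} [CommRing R] [LieRing L] [LieAlgebra R L]

theorem lie_mem_span_of_forall_lie_mem_span {s : Set L}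
    (hs : ∀ᵉ (a ∈ s) (b ∈ s), ⁅a, b⁆ ∈ span R s) {a b : L}
    (ha : a ∈ span R s) (hb : b ∈ span R s) : ⁅a, b⁆ ∈ span R s := by
  induction ha, hb using span_induction₂ with
  | mem_mem a b ha hb => exact hs a ha b hb
  | zero_left b _ => simp
  | zero_right a _ => simp
  | add_left a b c _ _ _ hac hbc => simpa only [add_lie] using add_mem hac hbc
  | add_right a b c _ _ _ hab hac => simpa only [lie_add] using add_mem hab hac
  | smul_left r a b _ _ h => simpa only [smul_lie] using smul_mem _ r h
  | smul_right r a b _ _ h => simpa only [lie_smul] using smul_mem _ r h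

theorem coe_lieSpan_eq_span_of_forall_lie_mem_span {s : Set L}
    (hs : ∀ᵉ (a ∈ s) (b ∈ s), ⁅a, b⁆ ∈ span R s) :
    lieSpan R L s = span R s := by
  refine le_antisymm ?_ submodule_span_le_lieSpan
  change _ ≤ ({ span R s with lie_mem' := lie_mem_span_of_forall_lie_mem_span hs } :
    LieSubalgebra R L)
  exact lieSpan_le.mpr subset_span

theorem forall_lie_mem_span_triple {x y : L}
    (hx : ⁅x, ⁅x, y⁆⁆ ∈ span R {x, y, ⁅x, y⁆}) (hy : ⁅y, ⁅y, x⁆⁆ ∈ span R {x, y, ⁅x, y⁆}) :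
    ∀ᵉ (a ∈ ({x, y, ⁅x, y⁆} : Set L)) (b ∈ ({x, y, ⁅x, y⁆} : Set L)),
      ⁅a, b⁆ ∈ span R {x, y, ⁅x, y⁆} := by
  set P := span R {x, y, ⁅x, y⁆}
  have hxy : ⁅x, y⁆ ∈ P := subset_span (by simp)
  have hyx : ⁅y, x⁆ ∈ P := by
    rw [← lie_skew]; exact neg_mem hxy
  have hyxy : ⁅y, ⁅x, y⁆⁆ ∈ P := by
    rw [← lie_skew x y, lie_neg]; exact neg_mem hy
  have hxyx : ⁅⁅x, y⁆, x⁆ ∈ P := by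
    rw [← lie_skew]; exact neg_mem hx
  have hxyy : ⁅⁅x, y⁆, y⁆ ∈ P := by
    rw [← lie_skew]; exact neg_mem hyxy
  simp only [Set.mem_insert_iff, Set.mem_singleton_iff]
  rintro a (rfl | rfl | rfl) b (rfl | rfl | rfl) <;> first | assumption | simp

theorem coe_lieSpan_pair_eq_span_triple {x y : L}
    (hx : ⁅x, ⁅x, y⁆⁆ ∈ span R {x, y, ⁅x, y⁆}) (hy : ⁅y, ⁅y, x⁆⁆ ∈ span R {x, y, ⁅x, y⁆}) :
    lieSpan R L {x, y} = span R {x, y, ⁅x, y⁆} := by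
  have hxy : ⁅x, y⁆ ∈ lieSpan R L {x, y} :=
    lie_mem _ (subset_lieSpan (by simp)) (subset_lieSpan (by simp))
  have htriple : lieSpan R L {x, y, ⁅x, y⁆} = lieSpan R L {x, y} := by
    refine le_antisymm (lieSpan_le.mpr ?_) (lieSpan_mono (by grind))
    simpa [Set.insert_subset_iff] using ⟨subset_lieSpan (by simp), subset_lieSpan (by simp), hxy⟩
  rw [← htriple, coe_lieSpan_eq_span_of_forall_lie_mem_span (forall_lie_mem_span_triple hx hy)]

end LieSubalgebra

theorem two_generated_span_general {K L : Type*} [Field K] [LieRing L] [LieAlgebra K L]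
    (x y : L) (fx fy : L →ₗ[K] K)
    (hx : ∀ m : L, ⁅x, ⁅x, m⁆⁆ = fx m • x)
    (hy : ∀ m : L, ⁅y, ⁅y, m⁆⁆ = fy m • y)
    (hgen : LieSubalgebra.lieSpan K L {x, y} = ⊤) :
    Submodule.span K {x, y, ⁅x, y⁆} = ⊤ := by
  have hxxy : ⁅x, ⁅x, y⁆⁆ ∈ span K {x, y, ⁅x, y⁆} :=
    hx y ▸ smul_mem _ _ (subset_span (by simp))
  have hyyx : ⁅y, ⁅y, x⁆⁆ ∈ span K {x, y, ⁅x, y⁆} :=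
    hy x ▸ smul_mem _ _ (subset_span (by simp))
  rw [← LieSubalgebra.coe_lieSpan_pair_eq_span_triple hxxy hyyx, hgen,
    LieSubalgebra.top_toSubmodule]

theorem two_generated_span {K L : Type*} [Field K] [LieRing L] [LieAlgebra K L]
    (hchar : (2 : K) ≠ 0) (x y : L) (fx fy : L →ₗ[K] K)
    (hx : ∀ m : L, ⁅x, ⁅x, m⁆⁆ = fx m • x)
    (hy : ∀ m : L, ⁅y, ⁅y, m⁆⁆ = fy m • y)
    (hgen : LieSubalgebra.lieSpan K L {x, y} = ⊤) :
    Submodule.span K {x, y, ⁅x, y⁆} = ⊤ :=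
  two_generated_span_general x y fx fy hx hy hgen
end

section
/- Let L be a Lie algebra over a field K of characteristic ≠ 2 and let x ∈ L be extremal with linear form f_x. Then for all a, b ∈ L, ⁅x, ⁅a, ⁅x, b⁆⁆⁆ can be written as a K-linear combination of x, ⁅x, a⁆ and ⁅x, b⁆; explicitly 2⁅x,⁅a,⁅x,b⁆⁆⁆ = f_x(⁅a,b⁆)x − f_x(b)⁅x,a⁆ − f_x(a)⁅x,b⁆, hence ⁅x,⁅a,⁅x,b⁆⁆⁆ lies in the span of {x, ⁅x,a⁆, ⁅x,b⁆}. -/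
theorem premet_span {K L : Type*} [Field K] [LieRing L] [LieAlgebra K L]
    (hchar : (2 : K) ≠ 0) (x : L) (fx : L →ₗ[K] K)
    (hx : ∀ m : L, ⁅x, ⁅x, m⁆⁆ = fx m • x) :
    ∀ a b : L,
      (2 : K) • ⁅x, ⁅a, ⁅x, b⁆⁆⁆ =
        fx ⁅a, b⁆ • x - fx b • ⁅x, a⁆ - fx a • ⁅x, b⁆ ∧
      ⁅x, ⁅a, ⁅x, b⁆⁆⁆ ∈ Submodule.span K {x, ⁅x, a⁆, ⁅x, b⁆} := by
  intro a b
  have h1 : ⁅x, ⁅a, ⁅x, b⁆⁆⁆ = ⁅⁅x, a⁆, ⁅x, b⁆⁆ - fx b • ⁅x, a⁆ := by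
    rw [leibniz_lie, hx b, lie_smul, ← lie_skew a x]
    module
  have h2 : fx ⁅a, b⁆ • x =
      fx a • ⁅x, b⁆ + ⁅⁅x, a⁆, ⁅x, b⁆⁆ + ⁅x, ⁅a, ⁅x, b⁆⁆⁆ := by
    rw [← hx ⁅a, b⁆, leibniz_lie x a b, lie_add, leibniz_lie x ⁅x, a⁆ b, hx a,
      smul_lie, add_assoc]
  have key : (2 : K) • ⁅x, ⁅a, ⁅x, b⁆⁆⁆ =
      fx ⁅a, b⁆ • x - fx b • ⁅x, a⁆ - fx a • ⁅x, b⁆ := by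
    rw [h2, h1]
    module
  refine ⟨key, ?_⟩
  have hT : ⁅x, ⁅a, ⁅x, b⁆⁆⁆ =
      (2 : K)⁻¹ • (fx ⁅a, b⁆ • x - fx b • ⁅x, a⁆ - fx a • ⁅x, b⁆) := by
    rw [← key, smul_smul, inv_mul_cancel₀ hchar, one_smul]
  rw [hT]
  have hxmem : x ∈ Submodule.span K {x, ⁅x, a⁆, ⁅x, b⁆} :=
    Submodule.subset_span (by simp)
  have ha : ⁅x, a⁆ ∈ Submodule.span K {x, ⁅x, a⁆, ⁅x, b⁆} :=
    Submodule.subset_span (by simp)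
  have hb : ⁅x, b⁆ ∈ Submodule.span K {x, ⁅x, a⁆, ⁅x, b⁆} :=
    Submodule.subset_span (by simp)
  exact Submodule.smul_mem _ _ (Submodule.sub_mem _
    (Submodule.sub_mem _ (Submodule.smul_mem _ _ hxmem) (Submodule.smul_mem _ _ ha))
    (Submodule.smul_mem _ _ hb))
end

section
/- Let L be a Lie algebra over a field K of characteristic ≠ 2, generated by extremal elements x and y with f_x ≡ 0 and f_y ≡ 0 (both sandwiches), and suppose x, y, ⁅x,y⁆ are linearly independent. Then L is isomorphic to the 3-dimensional Heisenberg Lie algebra over K. -/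
/-!
Since `x` and `y` are sandwiches, `⁅x, ⁅x, y⁆⁆ = 0` and `⁅y, ⁅x, y⁆⁆ = 0`. Hence the linear span
of `x`, `y`, `⁅x, y⁆` is closed under the bracket, so it contains the Lie span of `{x, y}`, which is
all of `L`; being linearly independent, `x, y, ⁅x, y⁆` is then a basis with Heisenberg brackets.
-/

open Submodule LieSubalgebra

section LieSpan

variable {R L : Type*} [CommRing R] [LieRing L] [LieAlgebra R L]

theorem LieSubalgebra.coe_lieSpan_eq_span_of_forall_lie_mem_span_s14 {s : Set L}
    (hs : ∀ᵉ (u ∈ s) (v ∈ s), ⁅u, v⁆ ∈ span R s) :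
    lieSpan R L s = span R s := by
  suffices ∀ {u v}, u ∈ span R s → v ∈ span R s → ⁅u, v⁆ ∈ span R s by
    refine le_antisymm ?_ submodule_span_le_lieSpan
    change _ ≤ ({ span R s with lie_mem' := this } : LieSubalgebra R L)
    exact lieSpan_le.mpr subset_span
  intro u v hu hv
  induction hu, hv using span_induction₂ with
  | mem_mem u v hu hv => exact hs u hu v hv
  | zero_left v _ => simp
  | zero_right u _ => simp
  | add_left u₁ u₂ v _ _ _ h₁ h₂ => simpa only [add_lie] using add_mem h₁ h₂
  | add_right u v₁ v₂ _ _ _ h₁ h₂ => simpa only [lie_add] using add_mem h₁ h₂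
  | smul_left r u v _ _ h => simpa only [smul_lie] using smul_mem _ r h
  | smul_right r u v _ _ h => simpa only [lie_smul] using smul_mem _ r h

variable {x y : L}

theorem lie_mem_span_triple_of_lie_lie_eq_zero (hx : ⁅x, ⁅x, y⁆⁆ = 0) (hy : ⁅y, ⁅x, y⁆⁆ = 0) :
    ∀ᵉ (u ∈ ({x, y, ⁅x, y⁆} : Set L)) (v ∈ ({x, y, ⁅x, y⁆} : Set L)),
      ⁅u, v⁆ ∈ span R ({x, y, ⁅x, y⁆} : Set L) := by
  have hxy : ⁅x, y⁆ ∈ span R ({x, y, ⁅x, y⁆} : Set L) := subset_span (by simp)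
  simp only [Set.forall_mem_insert, Set.mem_singleton_iff, forall_eq, lie_self, hx, hy,
    ← lie_skew y x, ← lie_skew ⁅x, y⁆ x, ← lie_skew ⁅x, y⁆ y, neg_zero, zero_mem, hxy,
    neg_mem_iff, and_self]

theorem span_triple_eq_top_of_lieSpan_eq_top (hx : ⁅x, ⁅x, y⁆⁆ = 0) (hy : ⁅y, ⁅x, y⁆⁆ = 0)
    (hgen : lieSpan R L {x, y} = ⊤) :
    span R ({x, y, ⁅x, y⁆} : Set L) = ⊤ := by
  rw [← coe_lieSpan_eq_span_of_forall_lie_mem_span_s14 (lie_mem_span_triple_of_lie_lie_eq_zero hx hy),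
    eq_top_iff, ← top_toSubmodule, toSubmodule_le_toSubmodule, ← hgen]
  exact lieSpan_mono (by simp [Set.insert_subset_iff])

end LieSpan

theorem two_sandwich_heisenberg_general {K L : Type*} [Field K] [LieRing L] [LieAlgebra K L]
    (x y : L)
    (hx : ∀ m : L, ⁅x, ⁅x, m⁆⁆ = 0)
    (hy : ∀ m : L, ⁅y, ⁅y, m⁆⁆ = 0)
    (hgen : LieSubalgebra.lieSpan K L {x, y} = ⊤)
    (hind : LinearIndependent K ![x, y, ⁅x, y⁆]) :
    ∃ b : Module.Basis (Fin 3) K L,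
      ⁅b 0, b 1⁆ = b 2 ∧ ⁅b 0, b 2⁆ = 0 ∧ ⁅b 1, b 2⁆ = 0 := by
  have hxz : ⁅x, ⁅x, y⁆⁆ = 0 := hx y
  have hyz : ⁅y, ⁅x, y⁆⁆ = 0 := by rw [← lie_skew x y, lie_neg, hy, neg_zero]
  have hspan : span K (Set.range ![x, y, ⁅x, y⁆]) = ⊤ := by
    rw [Matrix.range_cons, Matrix.range_cons_cons_empty, Set.singleton_union]
    exact span_triple_eq_top_of_lieSpan_eq_top hxz hyz hgen
  let b := Module.Basis.mk hind hspan.ge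
  exact ⟨b, by simp [b], by simpa [b] using hxz, by simpa [b] using hyz⟩

theorem two_sandwich_heisenberg {K L : Type*} [Field K] [LieRing L] [LieAlgebra K L]
    (hchar : (2 : K) ≠ 0) (x y : L)
    (hx : ∀ m : L, ⁅x, ⁅x, m⁆⁆ = 0)
    (hy : ∀ m : L, ⁅y, ⁅y, m⁆⁆ = 0)
    (hgen : LieSubalgebra.lieSpan K L {x, y} = ⊤)
    (hind : LinearIndependent K ![x, y, ⁅x, y⁆]) :
    ∃ b : Module.Basis (Fin 3) K L,
      ⁅b 0, b 1⁆ = b 2 ∧ ⁅b 0, b 2⁆ = 0 ∧ ⁅b 1, b 2⁆ = 0 :=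
  two_sandwich_heisenberg_general x y hx hy hgen hind
end
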